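/- arXiv:2207.00703 — 5 statements merged into one kernel-verified Lean document; each statement's English description precedes it below -/
import Mathlib

section
/- Let G : ℝ^{2n} \ {0} → ℝ be a smooth function with G(cos θ · y + sin θ · Jy) = G(y) for all θ and all y ≠ 0, where J is the standard complex structure. Define g_{ij}(y) = ½ ∂²G/∂y^i∂y^j. Then for every y ≠ 0 and every vector X ∈ ℝ^{2n}: ⟨Jy, JX⟩_{g_y} = ⟨y, X⟩_{g_y}, i.e. ∑_{i,j} g_{ij}(y) (Jy)^i (JX)^j = ∑_{i,j} g_{ij}(y) y^i X^j. -/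
/-- The standard complex structure `J` on `ℝ^{2n}`: `(Jy)^α = -y^{α+n}`, `(Jy)^{α+n} = y^α`. -/
def Jstd (n : ℕ) (y : Fin (2 * n) → ℝ) : Fin (2 * n) → ℝ := fun i =>
  if h : (i : ℕ) < n then -y ⟨(i : ℕ) + n, by have := i.isLt; omega⟩
  else y ⟨(i : ℕ) - n, by have := i.isLt; omega⟩

/-- Partial derivative `∂f/∂y^k` at `y`. -/
noncomputable def pd {m : ℕ} (f : (Fin m → ℝ) → ℝ) (y : Fin m → ℝ) (k : Fin m) : ℝ :=
  fderiv ℝ f y (Pi.single k 1)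

/-- Second partial derivative `∂²f/∂y^i∂y^j` at `y`. -/
noncomputable def pd2 {m : ℕ} (f : (Fin m → ℝ) → ℝ) (y : Fin m → ℝ) (i j : Fin m) : ℝ :=
  pd (fun z => pd f z j) y i

/-- The fundamental tensor `g_{ij}(y) = ½ ∂²G/∂y^i∂y^j` of a Finsler metric `G = F²`. -/
noncomputable def gfun {m : ℕ} (G : (Fin m → ℝ) → ℝ) (y : Fin m → ℝ) (i j : Fin m) : ℝ :=
  (1 / 2) * pd2 G y i j

lemma jstd_add (n : ℕ) (y z : Fin (2*n) → ℝ) : Jstd n (y + z) = Jstd n y + Jstd n z := by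
  funext i; simp only [Jstd, Pi.add_apply]; split <;> ring

lemma jstd_smul (n : ℕ) (c : ℝ) (y : Fin (2*n) → ℝ) : Jstd n (c • y) = c • Jstd n y := by
  funext i; simp only [Jstd, Pi.smul_apply, smul_eq_mul]; split <;> ring

lemma jstd_jstd (n : ℕ) (y : Fin (2*n) → ℝ) : Jstd n (Jstd n y) = -y := by
  funext i
  by_cases h : (i : ℕ) < n
  · have h2 : ¬ ((i:ℕ) + n < n) := by omega
    simp only [Jstd, dif_pos h, dif_neg h2, Pi.neg_apply]
    simp [show (i:ℕ)+n-n = (i:ℕ) from by omega, Fin.eta]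
  · have h2 : (i:ℕ) - n < n := by have := i.isLt; omega
    simp only [Jstd, dif_neg h, dif_pos h2, Pi.neg_apply]
    simp [show (i:ℕ)-n+n = (i:ℕ) from by omega, Fin.eta]

noncomputable def JL (n : ℕ) : (Fin (2*n) → ℝ) →L[ℝ] (Fin (2*n) → ℝ) :=
  LinearMap.toContinuousLinearMap
    { toFun := Jstd n
      map_add' := jstd_add n
      map_smul' := jstd_smul n }

@[simp] lemma JL_apply (n : ℕ) (y : Fin (2*n) → ℝ) : JL n y = Jstd n y := rfl

noncomputable def Rot (n : ℕ) (θ : ℝ) : (Fin (2*n) → ℝ) →L[ℝ] (Fin (2*n) → ℝ) :=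
  Real.cos θ • ContinuousLinearMap.id ℝ _ + Real.sin θ • JL n

lemma Rot_apply (n : ℕ) (θ : ℝ) (y : Fin (2*n) → ℝ) :
    Rot n θ y = Real.cos θ • y + Real.sin θ • Jstd n y := rfl

@[simp] lemma Rot_zero (n : ℕ) (y : Fin (2*n) → ℝ) : Rot n 0 y = y := by
  simp [Rot_apply]

lemma Rot_Rot (n : ℕ) (θ : ℝ) (y : Fin (2*n) → ℝ) :
    Rot n (-θ) (Rot n θ y) = y := by
  simp only [Rot_apply, Real.cos_neg, Real.sin_neg, jstd_add, jstd_smul, jstd_jstd,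
    smul_add, smul_smul, neg_smul, smul_neg]
  match_scalars <;> nlinarith [Real.sin_sq_add_cos_sq θ]

lemma Rot_ne_zero (n : ℕ) (θ : ℝ) (y : Fin (2*n) → ℝ) (hy : y ≠ 0) : Rot n θ y ≠ 0 := by
  intro h
  apply hy
  have := Rot_Rot n θ y
  rw [h] at this
  simpa using this.symm

/-- expansion of a vector in the standard basis -/
lemma pi_single_expand {m : ℕ} (u : Fin m → ℝ) : u = ∑ i, u i • (Pi.single i 1 : Fin m → ℝ) := by
  funext j
  simp [Pi.single_apply, Finset.sum_ite_eq]

lemma bilin_sum {m : ℕ} (B : (Fin m → ℝ) →L[ℝ] (Fin m → ℝ) →L[ℝ] ℝ) (u v : Fin m → ℝ) :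
    ∑ i, ∑ j, B (Pi.single i 1) (Pi.single j 1) * u i * v j = B u v := by
  conv_rhs => rw [pi_single_expand u]
  rw [map_sum, ContinuousLinearMap.sum_apply]
  refine Finset.sum_congr rfl (fun i _ => ?_)
  rw [map_smul, ContinuousLinearMap.smul_apply, smul_eq_mul]
  conv_rhs => rw [pi_single_expand v]
  rw [map_sum, Finset.mul_sum]
  refine Finset.sum_congr rfl (fun j _ => ?_)
  rw [map_smul, smul_eq_mul]
  ring

/-- **Partial J-invariance of the fundamental tensor** (Lemma 2.6).
For a strongly convex complex Finsler metric `G` (smooth away from `0`, positively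
2-homogeneous, invariant under `G(cos θ·y + sin θ·Jy) = G(y)`), the fundamental tensor
`g_{ij}(y) = ½∂²G/∂y^i∂y^j` satisfies `g_y(Jy, JX) = g_y(y, X)` for every `y ≠ 0`
and every vector `X`. -/
theorem g_partial_J_invariance (n : ℕ) (G : (Fin (2 * n) → ℝ) → ℝ)
    (hsmooth : ContDiffOn ℝ (⊤ : ℕ∞) G ({(0 : Fin (2 * n) → ℝ)}ᶜ))
    (hhom : ∀ c : ℝ, 0 < c → ∀ y : Fin (2 * n) → ℝ, G (c • y) = c ^ 2 * G y)
    (hrot : ∀ θ : ℝ, ∀ y : Fin (2 * n) → ℝ,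
      G (Real.cos θ • y + Real.sin θ • Jstd n y) = G y) :
    ∀ y : Fin (2 * n) → ℝ, y ≠ 0 → ∀ X : Fin (2 * n) → ℝ,
      (∑ i, ∑ j, gfun G y i j * Jstd n y i * Jstd n X j) =
        ∑ i, ∑ j, gfun G y i j * y i * X j := by
  -- basic differentiability facts
  have hca : ∀ z : Fin (2*n) → ℝ, z ≠ 0 → ContDiffAt ℝ (⊤ : ℕ∞) G z := by
    intro z hz
    exact hsmooth.contDiffAt (isOpen_compl_singleton.mem_nhds hz)
  have hd1 : ∀ z : Fin (2*n) → ℝ, z ≠ 0 → DifferentiableAt ℝ G z := fun z hz =>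
    (hca z hz).differentiableAt (by simp)
  have hd2 : ∀ z : Fin (2*n) → ℝ, z ≠ 0 → DifferentiableAt ℝ (fderiv ℝ G) z := fun z hz =>
    ((hca z hz).fderiv_right (m := 1) (WithTop.coe_le_coe.mpr le_top)).differentiableAt one_ne_zero
  -- L1 : homogeneity of the first derivative
  have L1 : ∀ c : ℝ, 0 < c → ∀ z : Fin (2*n) → ℝ, z ≠ 0 → ∀ v,
      fderiv ℝ G (c • z) v = c * fderiv ℝ G z v := by
    intro c hc z hz v
    have hcz : c • z ≠ 0 := smul_ne_zero (ne_of_gt hc) hz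
    have hinner : HasFDerivAt (fun w : Fin (2*n) → ℝ => c • w)
        (c • ContinuousLinearMap.id ℝ (Fin (2*n) → ℝ)) z := (hasFDerivAt_id z).const_smul c
    have h1 : HasFDerivAt (fun w => G (c • w))
        ((fderiv ℝ G (c • z)).comp (c • ContinuousLinearMap.id ℝ (Fin (2*n) → ℝ))) z :=
      ((hd1 _ hcz).hasFDerivAt).comp z hinner
    have h2 : HasFDerivAt (fun w => c ^ 2 * G w) ((c ^ 2) • fderiv ℝ G z) z :=
      ((hd1 z hz).hasFDerivAt).const_mul (c ^ 2)
    have heq : (fun w => G (c • w)) = fun w => c ^ 2 * G w := funext (fun w => hhom c hc w)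
    rw [heq] at h1
    have := h1.unique h2
    have happ := congrArg (fun (L : (Fin (2*n) → ℝ) →L[ℝ] ℝ) => L v) this
    simp only [ContinuousLinearMap.comp_apply, ContinuousLinearMap.smul_apply,
      ContinuousLinearMap.id_apply, smul_eq_mul, map_smul] at happ
    have hc' : c ≠ 0 := ne_of_gt hc
    have h3 : c * (fderiv ℝ G (c • z) v) = c * (c * fderiv ℝ G z v) := by
      rw [happ]; ring
    exact mul_left_cancel₀ hc' h3
  -- L2 : rotation invariance of the first derivative
  have L2 : ∀ θ : ℝ, ∀ z : Fin (2*n) → ℝ, z ≠ 0 → ∀ v,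
      fderiv ℝ G (Rot n θ z) (Rot n θ v) = fderiv ℝ G z v := by
    intro θ z hz v
    have hRz : Rot n θ z ≠ 0 := Rot_ne_zero n θ z hz
    have h1 : HasFDerivAt (fun w => G (Rot n θ w))
        ((fderiv ℝ G (Rot n θ z)).comp (Rot n θ)) z :=
      ((hd1 _ hRz).hasFDerivAt).comp z (Rot n θ).hasFDerivAt
    have heq : (fun w => G (Rot n θ w)) = G := by
      funext w
      rw [Rot_apply]
      exact hrot θ w
    rw [heq] at h1
    have := h1.unique (hd1 z hz).hasFDerivAt
    have happ := congrArg (fun (L : (Fin (2*n) → ℝ) →L[ℝ] ℝ) => L v) this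
    simpa using happ
  intro y hy X
  set D2 := fderiv ℝ (fderiv ℝ G) y with hD2def
  -- derivative of z ↦ fderiv G z w at y
  have hF : ∀ w : Fin (2*n) → ℝ, HasFDerivAt (fun z => fderiv ℝ G z w) (D2.flip w) y := by
    intro w
    have h := ((hd2 y hy).hasFDerivAt).clm_apply (hasFDerivAt_const w y)
    simpa using h
  -- helper : derivative along a curve
  have hcurve : ∀ (γ : ℝ → Fin (2*n) → ℝ) (u w : Fin (2*n) → ℝ), γ 0 = y →
      HasDerivAt γ u 0 → HasDerivAt (fun t => fderiv ℝ G (γ t) w) (D2 u w) 0 := by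
    intro γ u w hγ0 hγ
    have hFw := hF w
    rw [← hγ0] at hFw
    have h := hFw.comp_hasDerivAt 0 hγ
    simp at h; exact h
  -- (A) Euler identity at second order: D2 y w = fderiv G y w
  have hA : ∀ w, D2 y w = fderiv ℝ G y w := by
    intro w
    have hγ : HasDerivAt (fun t : ℝ => y + t • y) y 0 := by
      have := ((hasDerivAt_id (0:ℝ)).smul_const y).const_add y
      simpa using this
    have h1 : HasDerivAt (fun t : ℝ => fderiv ℝ G (y + t • y) w) (D2 y w) 0 :=
      hcurve _ y w (by simp) hγ
    have h2 : HasDerivAt (fun t : ℝ => (1 + t) * fderiv ℝ G y w) (fderiv ℝ G y w) 0 := by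
      have := ((hasDerivAt_id (0:ℝ)).const_add 1).mul_const (fderiv ℝ G y w)
      simpa using this
    have heq : (fun t : ℝ => fderiv ℝ G (y + t • y) w) =ᶠ[nhds (0:ℝ)]
        (fun t : ℝ => (1 + t) * fderiv ℝ G y w) := by
      filter_upwards [Ioo_mem_nhds (show (-1:ℝ) < 0 by norm_num) (show (0:ℝ) < 1 by norm_num)]
        with t ht
      have h1t : 0 < 1 + t := by linarith [ht.1]
      have : y + t • y = (1 + t) • y := by
        rw [add_smul, one_smul]
      rw [this, L1 (1 + t) h1t y hy w]
    have h1' : HasDerivAt (fun t : ℝ => (1 + t) * fderiv ℝ G y w) (D2 y w) 0 :=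
      h1.congr_of_eventuallyEq heq.symm
    exact h1'.unique h2
  -- (B) rotation: D2 (Jy) w = - fderiv G y (Jw)
  have hB : ∀ w, D2 (Jstd n y) w = - fderiv ℝ G y (Jstd n w) := by
    intro w
    -- curve θ ↦ Rot θ y
    have hγ : HasDerivAt (fun θ => Rot n θ y) (Jstd n y) 0 := by
      have h1 : HasDerivAt (fun θ : ℝ => Real.cos θ • y) ((-Real.sin 0) • y) 0 :=
        (Real.hasDerivAt_cos 0).smul_const y
      have h2 : HasDerivAt (fun θ : ℝ => Real.sin θ • Jstd n y) (Real.cos 0 • Jstd n y) 0 :=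
        (Real.hasDerivAt_sin 0).smul_const (Jstd n y)
      have := h1.add h2
      simp only [Rot_apply]
      simp at this; exact this
    have hδ : HasDerivAt (fun θ => Rot n θ w) (Jstd n w) 0 := by
      have h1 : HasDerivAt (fun θ : ℝ => Real.cos θ • w) ((-Real.sin 0) • w) 0 :=
        (Real.hasDerivAt_cos 0).smul_const w
      have h2 : HasDerivAt (fun θ : ℝ => Real.sin θ • Jstd n w) (Real.cos 0 • Jstd n w) 0 :=
        (Real.hasDerivAt_sin 0).smul_const (Jstd n w)
      have := h1.add h2
      simp only [Rot_apply]
      simp at this; exact this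
    have hc : HasDerivAt (fun θ => fderiv ℝ G (Rot n θ y)) (D2 (Jstd n y)) 0 := by
      have hbase : HasFDerivAt (fderiv ℝ G) D2 (Rot n 0 y) := by
        rw [Rot_zero]; exact (hd2 y hy).hasFDerivAt
      have h := hbase.comp_hasDerivAt 0 hγ
      exact h
    have hprod : HasDerivAt (fun θ => fderiv ℝ G (Rot n θ y) (Rot n θ w))
        (D2 (Jstd n y) (Rot n 0 w) + (fderiv ℝ G (Rot n 0 y)) (Jstd n w)) 0 := by
      exact hc.clm_apply hδ
    simp only [Rot_zero] at hprod
    have hconst : HasDerivAt (fun θ => fderiv ℝ G (Rot n θ y) (Rot n θ w)) 0 0 := by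
      have : (fun θ => fderiv ℝ G (Rot n θ y) (Rot n θ w)) = fun _ => fderiv ℝ G y w :=
        funext (fun θ => L2 θ y hy w)
      rw [this]
      exact hasDerivAt_const 0 _
    have := hprod.unique hconst
    linarith [this]
  -- rewrite the sums via the bilinear form D2
  have hpd2 : ∀ i j, pd2 G y i j = D2 (Pi.single i 1) (Pi.single j 1) := by
    intro i j
    have : fderiv ℝ (fun z => fderiv ℝ G z (Pi.single j 1)) y = D2.flip (Pi.single j 1) :=
      (hF (Pi.single j 1)).fderiv
    simp only [pd2, pd, this]
    rfl
  have hsum : ∀ u v : Fin (2*n) → ℝ,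
      ∑ i, ∑ j, gfun G y i j * u i * v j = (1/2) * D2 u v := by
    intro u v
    rw [← bilin_sum D2 u v, Finset.mul_sum]
    refine Finset.sum_congr rfl (fun i _ => ?_)
    rw [Finset.mul_sum]
    refine Finset.sum_congr rfl (fun j _ => ?_)
    rw [gfun, hpd2 i j]
    ring
  rw [hsum, hsum]
  -- finish: D2 (Jy) (JX) = fderiv G y X = D2 y X
  have hJJ : Jstd n (Jstd n X) = -X := jstd_jstd n X
  have : D2 (Jstd n y) (Jstd n X) = fderiv ℝ G y X := by
    rw [hB (Jstd n X), hJJ]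
    simp
  rw [this, hA X]
end

section
/- Let G : ℝ^{2n} \ {0} → ℝ be a smooth strongly convex complex Finsler metric whose fundamental tensor is fully J-invariant, i.e. g_y(JX, JY) = g_y(X, Y) for all y ≠ 0 and all X, Y ∈ ℝ^{2n}. Then the Cartan torsion C_{ijk}(y) = ¼ ∂³G/∂y^i∂y^j∂y^k vanishes identically; in particular G is a (Hermitian) Riemannian quadratic form. -/
/-- Third partial derivative `∂³f/∂y^i∂y^j∂y^k` at `y`. -/
noncomputable def pd3 {m : ℕ} (f : (Fin m → ℝ) → ℝ) (y : Fin m → ℝ) (i j k : Fin m) : ℝ :=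
  pd (fun z => pd2 f z j k) y i

section Main

variable {m : ℕ} {U : Set (Fin m → ℝ)} {f : (Fin m → ℝ) → ℝ} {y : Fin m → ℝ}

theorem contDiffOn_pd (hU : IsOpen U) (hf : ContDiffOn ℝ (⊤:ℕ∞) f U) (k : Fin m) :
    ContDiffOn ℝ (⊤:ℕ∞) (fun z => pd f z k) U := by
  have h1 : ContDiffOn ℝ (⊤:ℕ∞) (fderiv ℝ f) U :=
    hf.fderiv_of_isOpen hU (by exact_mod_cast le_refl _)
  have h2 : ContDiff ℝ (⊤:ℕ∞) (fun L : (Fin m → ℝ) →L[ℝ] ℝ => L (Pi.single k 1)) :=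
    (ContinuousLinearMap.apply ℝ ℝ (Pi.single k (1:ℝ) : Fin m → ℝ)).contDiff
  exact h2.comp_contDiffOn h1

theorem diffAt_of {F : Type*} [NormedAddCommGroup F] [NormedSpace ℝ F]
    {f : (Fin m → ℝ) → F} (hU : IsOpen U) (hf : ContDiffOn ℝ (⊤:ℕ∞) f U) (hy : y ∈ U) :
    DifferentiableAt ℝ f y :=
  ((hf.differentiableOn (by simp)).differentiableAt (hU.mem_nhds hy))

theorem pd_congr_nhds {g : (Fin m → ℝ) → ℝ} (h : f =ᶠ[nhds y] g) (k : Fin m) :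
    pd f y k = pd g y k := by
  unfold pd; rw [h.fderiv_eq]


theorem pd2_symm (hU : IsOpen U) (hf : ContDiffOn ℝ (⊤:ℕ∞) f U) (hy : y ∈ U) (i j : Fin m) :
    pd2 f y i j = pd2 f y j i := by
  have hsym : IsSymmSndFDerivAt ℝ f y :=
    (hf.contDiffAt (hU.mem_nhds hy)).isSymmSndFDerivAt (by simp [minSmoothness]; exact le_trans (by norm_cast) (WithTop.coe_le_coe.2 (le_top : (2:ℕ∞) ≤ ⊤)))
  have hdf : DifferentiableAt ℝ (fderiv ℝ f) y :=
    diffAt_of hU (hf.fderiv_of_isOpen hU (by exact_mod_cast le_refl _)) hy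
  have key : ∀ a b : Fin m, pd2 f y a b =
      fderiv ℝ (fderiv ℝ f) y (Pi.single a 1) (Pi.single b 1) := by
    intro a b
    unfold pd2 pd
    rw [fderiv_clm_apply hdf (differentiableAt_const _)]
    simp
  rw [key i j, key j i, hsym.eq]

theorem pd3_symm23 (hU : IsOpen U) (hf : ContDiffOn ℝ (⊤:ℕ∞) f U) (hy : y ∈ U) (i j k : Fin m) :
    pd3 f y i j k = pd3 f y i k j := by
  unfold pd3
  apply pd_congr_nhds
  filter_upwards [hU.mem_nhds hy] with z hz
  exact pd2_symm hU hf hz j k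

theorem pd3_symm12 (hU : IsOpen U) (hf : ContDiffOn ℝ (⊤:ℕ∞) f U) (hy : y ∈ U) (i j k : Fin m) :
    pd3 f y i j k = pd3 f y j i k := by
  have : ∀ a b : Fin m, pd3 f y a b k = pd2 (fun w => pd f w k) y a b := fun a b => rfl
  rw [this, this, pd2_symm hU (contDiffOn_pd hU hf k) hy]


theorem fderiv_eq_sum_pd (v : Fin m → ℝ) :
    fderiv ℝ f y v = ∑ s, v s * pd f y s := by
  have hv : v = ∑ s, v s • (Pi.single s 1 : Fin m → ℝ) := by
    funext t
    simp [Pi.single_apply, Finset.sum_ite_eq' (Finset.univ) t]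
  conv_lhs => rw [hv]
  rw [map_sum]
  simp [pd, smul_eq_mul]

theorem pd_sum {ι : Type*} (u : Finset ι) (F : ι → (Fin m → ℝ) → ℝ)
    (hd : ∀ i ∈ u, DifferentiableAt ℝ (F i) y) (k : Fin m) :
    pd (fun z => ∑ i ∈ u, F i z) y k = ∑ i ∈ u, pd (F i) y k := by
  unfold pd
  rw [fderiv_fun_sum hd]
  simp

theorem pd_mul_const (hd : DifferentiableAt ℝ f y) (c : ℝ) (k : Fin m) :
    pd (fun z => f z * c) y k = pd f y k * c := by
  unfold pd
  rw [fderiv_mul_const hd]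
  simp [mul_comm]

theorem pd_const_mul (hd : DifferentiableAt ℝ f y) (c : ℝ) (k : Fin m) :
    pd (fun z => c * f z) y k = c * pd f y k := by
  unfold pd
  rw [fderiv_const_mul hd]
  simp

/-- A function with vanishing fderiv on an open preconnected set is constant there. -/
theorem const_of_pd_zero {s : Set (Fin m → ℝ)} (hs : IsOpen s) (hs' : IsPreconnected s)
    (hd : ∀ x ∈ s, DifferentiableAt ℝ f x) (h0 : ∀ x ∈ s, fderiv ℝ f x = 0)
    {x z : Fin m → ℝ} (hx : x ∈ s) (hz : z ∈ s) : f x = f z := by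
  have locconst : ∀ w ∈ s, ∃ r > 0, Metric.ball w r ⊆ s ∧
      ∀ p ∈ Metric.ball w r, f p = f w := by
    intro w hw
    obtain ⟨r, hr, hball⟩ := Metric.isOpen_iff.1 hs w hw
    refine ⟨r, hr, hball, fun p hp => ?_⟩
    refine (convex_ball w r).is_const_of_fderivWithin_eq_zero
      (fun q hq => (hd q (hball hq)).differentiableWithinAt) (fun q hq => ?_) hp
      (Metric.mem_ball_self hr)
    rw [fderivWithin_of_isOpen Metric.isOpen_ball hq]
    exact h0 q (hball hq)
  set u := {w : Fin m → ℝ | w ∈ s ∧ f w = f x} with hu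
  set v := {w : Fin m → ℝ | w ∈ s ∧ f w ≠ f x} with hv
  have hou : IsOpen u := by
    rw [Metric.isOpen_iff]
    rintro w ⟨hws, hwf⟩
    obtain ⟨r, hr, hball, hc⟩ := locconst w hws
    exact ⟨r, hr, fun p hp => ⟨hball hp, (hc p hp).trans hwf⟩⟩
  have hov : IsOpen v := by
    rw [Metric.isOpen_iff]
    rintro w ⟨hws, hwf⟩
    obtain ⟨r, hr, hball, hc⟩ := locconst w hws
    exact ⟨r, hr, fun p hp => ⟨hball hp, (hc p hp).symm ▸ hwf⟩⟩
  have hsub : s ⊆ u := by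
    refine hs'.subset_left_of_subset_union hou hov ?_ ?_ ⟨x, hx, hx, rfl⟩
    · rw [Set.disjoint_iff]
      rintro w ⟨⟨_, h1⟩, ⟨_, h2⟩⟩
      exact absurd h1 h2
    · intro w hw
      by_cases h : f w = f x
      · exact Or.inl ⟨hw, h⟩
      · exact Or.inr ⟨hw, h⟩
  exact ((hsub hz).2).symm

theorem Jstd_Jstd (n : ℕ) (X : Fin (2 * n) → ℝ) : Jstd n (Jstd n X) = -X := by
  funext i
  unfold Jstd
  by_cases h : (i : ℕ) < n
  · rw [dif_pos h, dif_neg (show ¬((i:ℕ) + n < n) by omega)]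
    simp only [Fin.val_mk, Nat.add_sub_cancel]
    simp
  · have hi := i.isLt
    rw [dif_neg h, dif_pos (show (i:ℕ) - n < n by omega)]
    simp only [Fin.val_mk]
    have : (i:ℕ) - n + n = (i:ℕ) := by omega
    simp only [this, Fin.eta]
    simp

section Main

variable {n : ℕ} {G : (Fin (2 * n) → ℝ) → ℝ}

theorem stepA (hsm : ContDiffOn ℝ (⊤:ℕ∞) G ({(0 : Fin (2*n) → ℝ)}ᶜ))
    (hinv : ∀ y : Fin (2 * n) → ℝ, y ≠ 0 → ∀ X Y : Fin (2 * n) → ℝ,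
      (∑ i, ∑ j, gfun G y i j * Jstd n X i * Jstd n Y j) =
        ∑ i, ∑ j, gfun G y i j * X i * Y j)
    {y : Fin (2*n) → ℝ} (hy : y ≠ 0) (s : Fin (2*n)) (X Y : Fin (2*n) → ℝ) :
    ∑ i, ∑ j, pd3 G y s i j * Jstd n X i * Jstd n Y j
      = ∑ i, ∑ j, pd3 G y s i j * X i * Y j := by
  set U : Set (Fin (2*n) → ℝ) := {(0 : Fin (2*n) → ℝ)}ᶜ with hUdef
  have hU : IsOpen U := isOpen_compl_singleton
  have hyU : y ∈ U := hy
  have hd2 : ∀ i j : Fin (2*n), ∀ z ∈ U,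
      DifferentiableAt ℝ (fun w => pd2 G w i j) z := fun i j z hz =>
    diffAt_of hU (contDiffOn_pd hU (contDiffOn_pd hU hsm j) i) hz
  have expand : ∀ a b : Fin (2*n) → ℝ,
      pd (fun z => ∑ i, ∑ j, gfun G z i j * a i * b j) y s
        = ∑ i, ∑ j, pd3 G y s i j * ((1/2) * a i * b j) := by
    intro a b
    have hrw : ∀ i j : Fin (2*n), (fun z => gfun G z i j * a i * b j)
        = (fun z => pd2 G z i j * ((1/2) * a i * b j)) := by
      intro i j; funext z; unfold gfun; ring
    have hdterm : ∀ i j : Fin (2*n),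
        DifferentiableAt ℝ (fun z => gfun G z i j * a i * b j) y := by
      intro i j; rw [hrw i j]; exact (hd2 i j y hyU).mul_const _
    rw [pd_sum Finset.univ _ (fun i _ => DifferentiableAt.fun_sum (fun j _ => hdterm i j)) s]
    refine Finset.sum_congr rfl fun i _ => ?_
    rw [pd_sum Finset.univ _ (fun j _ => hdterm i j) s]
    refine Finset.sum_congr rfl fun j _ => ?_
    rw [hrw i j, pd_mul_const (hd2 i j y hyU)]
    rfl
  have heq : (fun z => ∑ i, ∑ j, gfun G z i j * Jstd n X i * Jstd n Y j)
      =ᶠ[nhds y] (fun z => ∑ i, ∑ j, gfun G z i j * X i * Y j) := by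
    filter_upwards [hU.mem_nhds hyU] with z hz
    exact hinv z hz X Y
  have hkey := pd_congr_nhds heq s
  rw [expand, expand] at hkey
  have h2 : (1/2 : ℝ) * (∑ i, ∑ j, pd3 G y s i j * Jstd n X i * Jstd n Y j)
      = (1/2 : ℝ) * (∑ i, ∑ j, pd3 G y s i j * X i * Y j) := by
    calc (1/2 : ℝ) * (∑ i, ∑ j, pd3 G y s i j * Jstd n X i * Jstd n Y j)
        = ∑ i, ∑ j, pd3 G y s i j * ((1/2) * Jstd n X i * Jstd n Y j) := by
          simp only [Finset.mul_sum]; refine Finset.sum_congr rfl fun i _ =>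
            Finset.sum_congr rfl fun j _ => by ring
      _ = ∑ i, ∑ j, pd3 G y s i j * ((1/2) * X i * Y j) := hkey
      _ = (1/2 : ℝ) * (∑ i, ∑ j, pd3 G y s i j * X i * Y j) := by
          simp only [Finset.mul_sum]; exact Finset.sum_congr rfl fun i _ =>
            Finset.sum_congr rfl fun j _ => by ring
  have := mul_left_cancel₀ (by norm_num : (1/2:ℝ) ≠ 0) h2
  exact this

theorem pd3_zero (hsm : ContDiffOn ℝ (⊤:ℕ∞) G ({(0 : Fin (2*n) → ℝ)}ᶜ))
    (hinv : ∀ y : Fin (2 * n) → ℝ, y ≠ 0 → ∀ X Y : Fin (2 * n) → ℝ,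
      (∑ i, ∑ j, gfun G y i j * Jstd n X i * Jstd n Y j) =
        ∑ i, ∑ j, gfun G y i j * X i * Y j)
    {y : Fin (2*n) → ℝ} (hy : y ≠ 0) (s p q : Fin (2*n)) :
    pd3 G y s p q = 0 := by
  set U : Set (Fin (2*n) → ℝ) := {(0 : Fin (2*n) → ℝ)}ᶜ with hUdef
  have hU : IsOpen U := isOpen_compl_singleton
  have hyU : y ∈ U := hy
  set C : (Fin (2*n) → ℝ) → (Fin (2*n) → ℝ) → (Fin (2*n) → ℝ) → ℝ :=
    fun X Y Z => ∑ a, ∑ b, ∑ c, pd3 G y a b c * X a * Y b * Z c with hC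
  have hsym12 : ∀ X Y Z, C X Y Z = C Y X Z := by
    intro X Y Z
    simp only [hC]
    rw [Finset.sum_comm]
    refine Finset.sum_congr rfl fun a _ => Finset.sum_congr rfl fun b _ =>
      Finset.sum_congr rfl fun c _ => ?_
    rw [pd3_symm12 hU hsm hyU]
    ring
  have hsym23 : ∀ X Y Z, C X Y Z = C X Z Y := by
    intro X Y Z
    simp only [hC]
    refine Finset.sum_congr rfl fun a _ => ?_
    rw [Finset.sum_comm]
    refine Finset.sum_congr rfl fun b _ => Finset.sum_congr rfl fun c _ => ?_
    rw [pd3_symm23 hU hsm hyU]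
    ring
  have hsym13 : ∀ X Y Z, C X Y Z = C Z Y X := by
    intro X Y Z
    rw [hsym12, hsym23, hsym12]
  have hneg1 : ∀ X Y Z, C (-X) Y Z = -C X Y Z := by
    intro X Y Z
    simp only [hC, Pi.neg_apply, neg_mul, mul_neg, Finset.sum_neg_distrib]
  have scalar_pull : ∀ W A B : Fin (2*n) → ℝ,
      (∑ a, ∑ b, ∑ c, pd3 G y a b c * W a * A b * B c)
        = ∑ a, W a * ∑ b, ∑ c, pd3 G y a b c * A b * B c := by
    intro W A B
    refine Finset.sum_congr rfl fun a _ => ?_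
    simp only [Finset.mul_sum]
    exact Finset.sum_congr rfl fun b _ => Finset.sum_congr rfl fun c _ => by ring
  have hrel : ∀ X Y Z, C Z X (Jstd n Y) = -C Z (Jstd n X) Y := by
    intro X Y Z
    have hs : ∀ a : Fin (2*n), (∑ b, ∑ c, pd3 G y a b c * X b * Jstd n Y c)
        = -∑ b, ∑ c, pd3 G y a b c * Jstd n X b * Y c := by
      intro a
      have h1 := stepA hsm hinv hy a (Jstd n X) Y
      rw [Jstd_Jstd] at h1
      have h2 : (∑ b, ∑ c, pd3 G y a b c * (-X) b * Jstd n Y c)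
          = -∑ b, ∑ c, pd3 G y a b c * X b * Jstd n Y c := by
        simp only [Pi.neg_apply, neg_mul, mul_neg, Finset.sum_neg_distrib]
      rw [h2] at h1
      linarith
    simp only [hC]
    rw [scalar_pull Z X (Jstd n Y), scalar_pull Z (Jstd n X) Y, ← Finset.sum_neg_distrib]
    refine Finset.sum_congr rfl fun a _ => ?_
    rw [hs a]
    ring
  have hD12 : ∀ X Y Z, C (Jstd n X) Y Z = -C (Jstd n Y) X Z := by
    intro X Y Z
    calc C (Jstd n X) Y Z = C Z Y (Jstd n X) := by rw [hsym13]
      _ = -C Z (Jstd n Y) X := hrel Y X Z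
      _ = -C (Jstd n Y) X Z := by rw [hsym12 Z (Jstd n Y) X, hsym23]
  have hD23 : ∀ X Y Z, C (Jstd n X) Y Z = C (Jstd n X) Z Y := fun X Y Z => hsym23 _ Y Z
  have hDzero : ∀ X Y Z, C (Jstd n X) Y Z = 0 := by
    intro X Y Z
    have h1 : C (Jstd n X) Y Z = -C (Jstd n X) Y Z := by
      calc C (Jstd n X) Y Z = -C (Jstd n Y) X Z := hD12 X Y Z
        _ = -C (Jstd n Y) Z X := by rw [hD23]
        _ = C (Jstd n Z) Y X := by rw [hD12 Y Z X]; ring_nf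
        _ = C (Jstd n Z) X Y := by rw [hD23]
        _ = -C (Jstd n X) Z Y := hD12 Z X Y
        _ = -C (Jstd n X) Y Z := by rw [hD23]
    linarith
  have hCzero : ∀ X Y Z, C X Y Z = 0 := by
    intro X Y Z
    have h := hDzero (Jstd n X) Y Z
    rw [Jstd_Jstd, hneg1] at h
    linarith
  have h := hCzero (Pi.single s 1) (Pi.single p 1) (Pi.single q 1)
  simp only [hC] at h
  simpa [Pi.single_apply, mul_ite, ite_mul, mul_zero, zero_mul, mul_one, one_mul,
    Finset.sum_ite_eq', Finset.mem_univ] using h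

theorem pd_scale (hsm : ContDiffOn ℝ (⊤:ℕ∞) G ({(0 : Fin (2*n) → ℝ)}ᶜ))
    (hhom : ∀ c : ℝ, 0 < c → ∀ y : Fin (2 * n) → ℝ, G (c • y) = c ^ 2 * G y)
    {y : Fin (2*n) → ℝ} (hy : y ≠ 0) {c : ℝ} (hc : 0 < c) (j : Fin (2*n)) :
    pd G (c • y) j = c * pd G y j := by
  have hU : IsOpen ({(0 : Fin (2*n) → ℝ)}ᶜ) := isOpen_compl_singleton
  have hcy : c • y ≠ 0 := smul_ne_zero (ne_of_gt hc) hy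
  have dG1 : DifferentiableAt ℝ G (c • y) := diffAt_of hU hsm hcy
  have dG2 : DifferentiableAt ℝ G y := diffAt_of hU hsm hy
  have hfe : (fun z : Fin (2*n) → ℝ => G (c • z)) = (fun z => c ^ 2 * G z) :=
    funext (hhom c hc)
  have hinner : HasFDerivAt (fun z : Fin (2*n) → ℝ => c • z)
      (c • ContinuousLinearMap.id ℝ (Fin (2*n) → ℝ)) y := by
    have := (c • ContinuousLinearMap.id ℝ (Fin (2*n) → ℝ)).hasFDerivAt (x := y)
    simpa using this
  have H1 : HasFDerivAt (fun z : Fin (2*n) → ℝ => G (c • z))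
      ((fderiv ℝ G (c • y)).comp (c • ContinuousLinearMap.id ℝ (Fin (2*n) → ℝ))) y :=
    HasFDerivAt.comp y (dG1.hasFDerivAt) hinner
  have H2 : HasFDerivAt (fun z : Fin (2*n) → ℝ => c ^ 2 * G z)
      ((c ^ 2) • fderiv ℝ G y) y := dG2.hasFDerivAt.const_mul (c ^ 2)
  rw [hfe] at H1
  have hunique := H1.unique H2
  have happ := congrArg (fun L : (Fin (2*n) → ℝ) →L[ℝ] ℝ => L (Pi.single j 1)) hunique
  simp only [ContinuousLinearMap.comp_apply, ContinuousLinearMap.smul_apply,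
    ContinuousLinearMap.id_apply, map_smul, smul_eq_mul] at happ
  -- happ : c * fderiv G (c•y) (single j 1) = c^2 * fderiv G y (single j 1)
  unfold pd
  have hc' : c ≠ 0 := ne_of_gt hc
  have h3 : c * fderiv ℝ G (c • y) (Pi.single j 1)
      = c * (c * fderiv ℝ G y (Pi.single j 1)) := by
    rw [happ]; ring
  exact mul_left_cancel₀ hc' h3

theorem euler1 (hsm : ContDiffOn ℝ (⊤:ℕ∞) G ({(0 : Fin (2*n) → ℝ)}ᶜ))
    (hhom : ∀ c : ℝ, 0 < c → ∀ y : Fin (2 * n) → ℝ, G (c • y) = c ^ 2 * G y)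
    {y : Fin (2*n) → ℝ} (hy : y ≠ 0) :
    ∑ s, y s * pd G y s = 2 * G y := by
  have hU : IsOpen ({(0 : Fin (2*n) → ℝ)}ᶜ) := isOpen_compl_singleton
  have dG : DifferentiableAt ℝ G y := diffAt_of hU hsm hy
  have hsmul : HasDerivAt (fun t : ℝ => t • y) y 1 := by
    simpa using (hasDerivAt_id (1:ℝ)).smul_const y
  have hd1 : HasDerivAt (fun t : ℝ => G (t • y)) (fderiv ℝ G y y) 1 := by
    have hl : HasFDerivAt G (fderiv ℝ G y) ((1:ℝ) • y) := by
      rw [one_smul]; exact dG.hasFDerivAt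
    simpa [Function.comp_def] using hl.comp_hasDerivAt (1:ℝ) hsmul
  have heq : (fun t : ℝ => G (t • y)) =ᶠ[nhds 1] (fun t => t ^ 2 * G y) := by
    filter_upwards [Ioi_mem_nhds (zero_lt_one)] with t ht
    exact hhom t ht y
  have hd2 : HasDerivAt (fun t : ℝ => t ^ 2 * G y) (2 * G y) 1 := by
    simpa using (hasDerivAt_pow 2 (1:ℝ)).mul_const (G y)
  have hd2' : HasDerivAt (fun t : ℝ => G (t • y)) (2 * G y) 1 :=
    hd2.congr_of_eventuallyEq heq
  have := hd1.unique hd2'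
  rw [← this, fderiv_eq_sum_pd]

theorem euler2 (hsm : ContDiffOn ℝ (⊤:ℕ∞) G ({(0 : Fin (2*n) → ℝ)}ᶜ))
    (hhom : ∀ c : ℝ, 0 < c → ∀ y : Fin (2 * n) → ℝ, G (c • y) = c ^ 2 * G y)
    {y : Fin (2*n) → ℝ} (hy : y ≠ 0) (j : Fin (2*n)) :
    ∑ s, y s * pd2 G y s j = pd G y j := by
  have hU : IsOpen ({(0 : Fin (2*n) → ℝ)}ᶜ) := isOpen_compl_singleton
  have dpdG : DifferentiableAt ℝ (fun z => pd G z j) y :=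
    diffAt_of hU (contDiffOn_pd hU hsm j) hy
  have hsmul : HasDerivAt (fun t : ℝ => t • y) y 1 := by
    simpa using (hasDerivAt_id (1:ℝ)).smul_const y
  have hd1 : HasDerivAt (fun t : ℝ => pd G (t • y) j)
      (fderiv ℝ (fun z => pd G z j) y y) 1 := by
    have hl : HasFDerivAt (fun z => pd G z j) (fderiv ℝ (fun z => pd G z j) y) ((1:ℝ) • y) := by
      rw [one_smul]; exact dpdG.hasFDerivAt
    simpa [Function.comp_def] using hl.comp_hasDerivAt (1:ℝ) hsmul
  have heq : (fun t : ℝ => pd G (t • y) j) =ᶠ[nhds 1] (fun t => t * pd G y j) := by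
    filter_upwards [Ioi_mem_nhds (zero_lt_one)] with t ht
    exact pd_scale hsm hhom hy ht j
  have hd2 : HasDerivAt (fun t : ℝ => t * pd G y j) (pd G y j) 1 := by
    simpa using (hasDerivAt_id (1:ℝ)).mul_const (pd G y j)
  have hd2' : HasDerivAt (fun t : ℝ => pd G (t • y) j) (pd G y j) 1 :=
    hd2.congr_of_eventuallyEq heq
  have huniq := hd1.unique hd2'
  rw [← huniq, fderiv_eq_sum_pd]
  rfl



end Main

/-- **Rigidity** (Proposition 2.7): if the fundamental tensor of a strongly convex
complex Finsler metric `G` is fully `J`-invariant, `g_y(JX,JY) = g_y(X,Y)` for all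
`y ≠ 0` and all `X, Y`, then the Cartan torsion `C_{ijk}(y) = ¼∂³G/∂y^i∂y^j∂y^k`
vanishes identically; in particular `G` is a (Hermitian) Riemannian quadratic form. -/
theorem full_J_invariance_rigidity (n : ℕ) (G : (Fin (2 * n) → ℝ) → ℝ)
    (hsmooth : ContDiffOn ℝ (⊤ : ℕ∞) G ({(0 : Fin (2 * n) → ℝ)}ᶜ))
    (hhom : ∀ c : ℝ, 0 < c → ∀ y : Fin (2 * n) → ℝ, G (c • y) = c ^ 2 * G y)
    (hrot : ∀ θ : ℝ, ∀ y : Fin (2 * n) → ℝ,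
      G (Real.cos θ • y + Real.sin θ • Jstd n y) = G y)
    (hposdef : ∀ y : Fin (2 * n) → ℝ, y ≠ 0 → ∀ X : Fin (2 * n) → ℝ, X ≠ 0 →
      0 < ∑ i, ∑ j, gfun G y i j * X i * X j)
    (hinv : ∀ y : Fin (2 * n) → ℝ, y ≠ 0 → ∀ X Y : Fin (2 * n) → ℝ,
      (∑ i, ∑ j, gfun G y i j * Jstd n X i * Jstd n Y j) =
        ∑ i, ∑ j, gfun G y i j * X i * Y j) :
    (∀ y : Fin (2 * n) → ℝ, y ≠ 0 → ∀ i j k : Fin (2 * n),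
        (1 / 4 : ℝ) * pd3 G y i j k = 0) ∧
      ∃ Q : Fin (2 * n) → Fin (2 * n) → ℝ,
        ∀ y : Fin (2 * n) → ℝ, y ≠ 0 → G y = ∑ i, ∑ j, Q i j * y i * y j := by
  have hsm : ContDiffOn ℝ (⊤:ℕ∞) G ({(0 : Fin (2 * n) → ℝ)}ᶜ) := hsmooth.of_le (by simp)
  constructor
  · intro y hy i j k
    rw [pd3_zero hsm hinv hy]
    ring
  · rcases Nat.eq_zero_or_pos n with hn | hn
    · subst hn
      refine ⟨fun _ _ => 0, fun y hy => absurd ?_ hy⟩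
      funext i
      exact i.elim0
    · set y₀ : Fin (2*n) → ℝ := fun _ => 1 with hy₀def
      have hy₀ : y₀ ≠ 0 := by
        intro h
        have h2 := congrFun h ⟨0, by omega⟩
        simp only [hy₀def, Pi.zero_apply] at h2
        exact one_ne_zero h2
      refine ⟨fun i j => gfun G y₀ i j, ?_⟩
      intro y hy
      have hU : IsOpen ({(0:Fin (2*n)→ℝ)}ᶜ) := isOpen_compl_singleton
      have hpre : IsPreconnected ({(0:Fin (2*n)→ℝ)}ᶜ) := by
        have hrank : 1 < Module.rank ℝ (Fin (2*n) → ℝ) := by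
          rw [rank_fin_fun]
          exact_mod_cast (by omega : 1 < 2*n)
        exact (isConnected_compl_singleton_of_one_lt_rank hrank 0).isPreconnected
      have hconst : ∀ i j : Fin (2*n), pd2 G y₀ i j = pd2 G y i j := by
        intro i j
        refine const_of_pd_zero hU hpre
          (fun x hx => diffAt_of hU (contDiffOn_pd hU (contDiffOn_pd hU hsm j) i) hx)
          (fun x hx => ?_) hy₀ hy
        apply ContinuousLinearMap.ext
        intro v
        rw [fderiv_eq_sum_pd]
        simp only [ContinuousLinearMap.zero_apply]
        refine Finset.sum_eq_zero fun s _ => ?_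
        show v s * pd3 G x s i j = 0
        rw [pd3_zero hsm hinv hx]
        ring
      have e1 := euler1 hsm hhom hy
      have e2 : ∀ j : Fin (2*n), ∑ s, y s * pd2 G y s j = pd G y j :=
        fun j => euler2 hsm hhom hy j
      have key : ∀ j : Fin (2*n), (∑ i, (1/2 : ℝ) * pd2 G y i j * y i * y j)
          = (1/2 : ℝ) * (y j * pd G y j) := by
        intro j
        rw [← e2 j, Finset.mul_sum, Finset.mul_sum]
        exact Finset.sum_congr rfl fun i _ => by ring
      calc G y = (1/2 : ℝ) * (2 * G y) := by ring
        _ = (1/2 : ℝ) * ∑ s, y s * pd G y s := by rw [e1]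
        _ = ∑ j, (1/2 : ℝ) * (y j * pd G y j) := by rw [Finset.mul_sum]
        _ = ∑ j, ∑ i, (1/2 : ℝ) * pd2 G y i j * y i * y j :=
            Finset.sum_congr rfl fun j _ => (key j).symm
        _ = ∑ i, ∑ j, (1/2 : ℝ) * pd2 G y i j * y i * y j := Finset.sum_comm
        _ = ∑ i, ∑ j, gfun G y₀ i j * y i * y j := by
            refine Finset.sum_congr rfl fun i _ => Finset.sum_congr rfl fun j _ => ?_
            unfold gfun
            rw [hconst i j]

end Main
end

section
/- Let C : ℝ^{2n} → ℝ (with three indices C_{ijk}) be a totally symmetric 3-tensor on ℝ^{2n} and J the standard complex structure with J² = -Id. Suppose C_{ijs} J^i_p J^j_q = C_{pqs} for all p, q, s. Then C = 0. -/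
/-!
Since `J² = -1`, the matrix `J` is a signed involution `e_p ↦ ε_p e_{σ p}` with `ε_{σ p} = -ε_p`.
By total symmetry, invariance under `J ⊗ J` in slots (1,2) gives invariance in slots (1,3) and
(2,3) as well. Applying `J ⊗ J` to slots (1,2) and then to slots (2,3) moves `C_{pqs}` to the same
entry as applying it to slots (1,3) alone, up to the sign `ε_{σ q} ε_q = -1`; hence `C = -C`.
-/

/-- The matrix entries `J^i_k` of the standard complex structure on `ℝ^{2n}`:
`J^i_k = δ^i_{k+n}` for `k ≤ n` and `J^i_k = -δ^i_{k-n}` for `k > n`; it satisfies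
`J^i_k J^k_j = -δ^i_j`. -/
def Jmat (n : ℕ) (i k : Fin (2 * n)) : ℝ :=
  if (k : ℕ) < n then (if (i : ℕ) = (k : ℕ) + n then 1 else 0)
  else (if (i : ℕ) + n = (k : ℕ) then -1 else 0)

section SignedInvolution

variable {ι R : Type*} [CommRing R] {σ : ι → ι} {ε : ι → R} {C : ι → ι → ι → R}

theorem eq_zero_of_signedInvolution_invariant [IsAddTorsionFree R] (hσ : Function.Involutive σ)
    (hε : ∀ p, ε (σ p) = -ε p) (hε_sq : ∀ p, ε p * ε p = 1)
    (hsym₁ : ∀ i j k, C i j k = C j i k) (hsym₂ : ∀ i j k, C i j k = C i k j)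
    (hinv : ∀ p q s, ε p * ε q * C (σ p) (σ q) s = C p q s) (p q s : ι) :
    C p q s = 0 := by
  have hinv₁₃ : ∀ p q s, ε p * ε s * C (σ p) q (σ s) = C p q s := fun p q s => by
    rw [hsym₂, hinv, ← hsym₂]
  have hinv₂₃ : ∀ p q s, ε q * ε s * C p (σ q) (σ s) = C p q s := fun p q s => by
    rw [hsym₁, hinv₁₃, ← hsym₁]
  have hσq := hinv₂₃ (σ p) (σ q) s
  rw [hσ q, hε] at hσq
  refine self_eq_neg.mp ?_
  calc C p q s = ε p * ε q * C (σ p) (σ q) s := (hinv p q s).symm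
    _ = -(ε q * ε q) * (ε p * ε s * C (σ p) q (σ s)) := by rw [← hσq]; ring
    _ = -C p q s := by rw [hε_sq, hinv₁₃]; ring

end SignedInvolution

namespace Jmat

def perm (n : ℕ) (p : Fin (2 * n)) : Fin (2 * n) :=
  if h : (p : ℕ) < n then ⟨p + n, by omega⟩ else ⟨p - n, (Nat.sub_le _ _).trans_lt p.isLt⟩

def sign (n : ℕ) (p : Fin (2 * n)) : ℝ :=
  if (p : ℕ) < n then 1 else -1

theorem val_perm (n : ℕ) (p : Fin (2 * n)) :
    (perm n p : ℕ) = if (p : ℕ) < n then p + n else p - n := by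
  unfold perm; split_ifs <;> rfl

theorem eq_ite_perm (n : ℕ) (i p : Fin (2 * n)) :
    Jmat n i p = if i = perm n p then sign n p else 0 := by
  simp only [Jmat, sign, Fin.ext_iff, val_perm]
  split_ifs <;> first | rfl | (exfalso; omega)

theorem perm_involutive (n : ℕ) : Function.Involutive (perm n) := fun p => by
  have := p.isLt
  simp only [Fin.ext_iff, val_perm]
  split_ifs <;> omega

theorem sign_perm (n : ℕ) (p : Fin (2 * n)) : sign n (perm n p) = -sign n p := by
  have := p.isLt
  simp only [sign, val_perm]
  split_ifs <;> first | (exfalso; omega) | norm_num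

theorem sign_mul_self (n : ℕ) (p : Fin (2 * n)) : sign n p * sign n p = 1 := by
  unfold sign
  split_ifs <;> norm_num

theorem sum_sum_mul_mul (n : ℕ) (C : Fin (2 * n) → Fin (2 * n) → Fin (2 * n) → ℝ)
    (p q s : Fin (2 * n)) :
    ∑ i, ∑ j, C i j s * Jmat n i p * Jmat n j q =
      sign n p * sign n q * C (perm n p) (perm n q) s := by
  simp only [eq_ite_perm, mul_ite, ite_mul, mul_zero, zero_mul, Finset.sum_ite_eq',
    Finset.mem_univ, if_true]
  ring

end Jmat

/-- A totally symmetric 3-tensor `C` on `ℝ^{2n}` satisfying the `J`-invariance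
`C_{ijs} J^i_p J^j_q = C_{pqs}` in its first two slots must vanish. -/
theorem symmetric_J_invariant_tensor_vanishes (n : ℕ)
    (C : Fin (2 * n) → Fin (2 * n) → Fin (2 * n) → ℝ)
    (hsym₁ : ∀ i j k, C i j k = C j i k)
    (hsym₂ : ∀ i j k, C i j k = C i k j)
    (hJ : ∀ p q s, (∑ i, ∑ j, C i j s * Jmat n i p * Jmat n j q) = C p q s) :
    ∀ i j k, C i j k = 0 :=
  eq_zero_of_signedInvolution_invariant (Jmat.perm_involutive n) (Jmat.sign_perm n)
    (Jmat.sign_mul_self n) hsym₁ hsym₂ fun p q s => by rw [← Jmat.sum_sum_mul_mul, hJ]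
end

section
/- On a strongly convex weakly Kähler Finsler manifold, the complex structure J is parallel along the spray direction with respect to the Berwald connection: (∇_{y^H} J)(y) = ∇_{y^H}(Jy) = 0. Concretely, in complex coordinates, J^i_{k|l} y^k y^l = Ĝ^i_s u^s - 2 J^i_s Ĝ^s = 0, where u = Jy. -/
/-- The inclusion `α ↦ α` of `Fin n` into `Fin (2n)`. -/
def lo (n : ℕ) (α : Fin n) : Fin (2 * n) := ⟨(α : ℕ), by have := α.isLt; omega⟩

/-- The inclusion `α ↦ α + n` of `Fin n` into `Fin (2n)`. -/
def hi (n : ℕ) (α : Fin n) : Fin (2 * n) := ⟨(α : ℕ) + n, by have := α.isLt; omega⟩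

/-- Complex scalar multiplication `ζ·y` on `ℝ^{2n} ≅ ℂⁿ`: `ζ·y = (Re ζ)y + (Im ζ)Jy`. -/
def cmul (n : ℕ) (ζ : ℂ) (y : Fin (2 * n) → ℝ) : Fin (2 * n) → ℝ :=
  ζ.re • y + ζ.im • Jstd n y

/-- The local data, in a complex coordinate system, of the geodesic spray of a strongly
convex weakly Kähler Finsler metric: the real spray coefficients `Ĝ^i(y)`, smooth away
from the origin, such that (weak Kählerness, Abate–Patrizio Prop. 2.6.2) the complex
combinations `𝔾^α = Ĝ^α + i·Ĝ^{α+n}` are the complex spray coefficients, and in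
particular are `(2,0)`-homogeneous in the complex variable. -/
structure WeaklyKahlerSprayData (n : ℕ) where
  /-- the real spray coefficients `Ĝ^i` -/
  spray : Fin (2 * n) → (Fin (2 * n) → ℝ) → ℝ
  smooth : ∀ i, ContDiffOn ℝ (⊤ : ℕ∞) (spray i) ({(0 : Fin (2 * n) → ℝ)}ᶜ)
  /-- weak Kählerness: `𝔾^α = Ĝ^α + i·Ĝ^{α+n}` is `(2,0)`-homogeneous -/
  weaklyKahler : ∀ α : Fin n, ∀ ζ : ℂ, ∀ y : Fin (2 * n) → ℝ, y ≠ 0 →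
    ((spray (lo n α) (cmul n ζ y) : ℂ) + (spray (hi n α) (cmul n ζ y) : ℂ) * Complex.I) =
      ζ ^ 2 * ((spray (lo n α) y : ℂ) + (spray (hi n α) y : ℂ) * Complex.I)

/-! ### Auxiliary lemmas: the complex structure matrix -/

lemma Jstd_lo (n : ℕ) (y : Fin (2*n) → ℝ) (α : Fin n) : Jstd n y (lo n α) = -y (hi n α) := by
  have hα := α.isLt
  simp only [Jstd, lo, hi, Fin.val_mk]
  exact dif_pos hα

lemma Jstd_hi (n : ℕ) (y : Fin (2*n) → ℝ) (α : Fin n) : Jstd n y (hi n α) = y (lo n α) := by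
  have hα := α.isLt
  simp only [Jstd, lo, hi, Fin.val_mk]
  split_ifs with h
  · omega
  exact (dif_neg h).trans (congrArg y (Fin.ext (by simp)))

lemma Jrow_lo (n : ℕ) (α : Fin n) (g : Fin (2*n) → ℝ) :
    ∑ s, Jmat n (lo n α) s * g s = -g (hi n α) := by
  have hα := α.isLt
  rw [Finset.sum_eq_single (hi n α)]
  · simp only [Jmat, lo, hi, Fin.val_mk]
    rw [if_neg (by omega)]
    simp
  · intro b _ hb
    have hb' : (b : ℕ) ≠ (α : ℕ) + n := fun h => hb (Fin.ext (by simpa [hi] using h))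
    simp only [Jmat, lo, Fin.val_mk]
    split_ifs with h1 h2 h3 <;> first | omega | (rw [mul_eq_zero]; left; exact if_neg (by omega)) | ring
  · intro h; exact absurd (Finset.mem_univ _) h

lemma Jrow_hi (n : ℕ) (α : Fin n) (g : Fin (2*n) → ℝ) :
    ∑ s, Jmat n (hi n α) s * g s = g (lo n α) := by
  have hα := α.isLt
  rw [Finset.sum_eq_single (lo n α)]
  · simp only [Jmat, lo, hi, Fin.val_mk]
    rw [if_pos hα]
    simp
  · intro b _ hb
    have hb' : (b : ℕ) ≠ (α : ℕ) := fun h => hb (Fin.ext (by simpa [lo] using h))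
    simp only [Jmat, hi, Fin.val_mk]
    split_ifs with h1 h2 h3 <;> first | omega | (rw [mul_eq_zero]; left; exact if_neg (by omega)) | ring
  · intro h; exact absurd (Finset.mem_univ _) h

lemma Jcol (n : ℕ) (y : Fin (2*n) → ℝ) (s : Fin (2*n)) :
    ∑ k, Jmat n s k * y k = Jstd n y s := by
  rcases lt_or_ge (s : ℕ) n with h | h
  · have hs : s = lo n ⟨(s:ℕ), h⟩ := Fin.ext rfl
    rw [hs, Jrow_lo, Jstd_lo]
  · have h2 : (s : ℕ) - n < n := by have := s.isLt; omega
    have hs : s = hi n ⟨(s:ℕ) - n, h2⟩ := Fin.ext (by simp [hi]; omega)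
    rw [hs, Jrow_hi, Jstd_hi]

/-! ### Auxiliary lemmas: finite sum rearrangements -/

lemma rearr1 {m : ℕ} (J P : Fin m → Fin m → ℝ) (y : Fin m → ℝ) :
    ∑ k, ∑ l, (∑ s, J s k * P s l) * y k * y l
      = ∑ s, (∑ k, J s k * y k) * (∑ l, P s l * y l) := by
  calc ∑ k, ∑ l, (∑ s, J s k * P s l) * y k * y l
      = ∑ k, ∑ s, ∑ l, J s k * P s l * y k * y l := by
        refine Finset.sum_congr rfl fun k _ => ?_
        simp only [Finset.sum_mul]
        rw [Finset.sum_comm]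
    _ = ∑ s, ∑ k, ∑ l, J s k * P s l * y k * y l := Finset.sum_comm
    _ = ∑ s, (∑ k, J s k * y k) * (∑ l, P s l * y l) := by
        refine Finset.sum_congr rfl fun s _ => ?_
        rw [Finset.sum_mul_sum]
        exact Finset.sum_congr rfl fun k _ => Finset.sum_congr rfl fun l _ => by ring

lemma rearr2 {m : ℕ} (c : Fin m → ℝ) (Q : Fin m → Fin m → Fin m → ℝ) (y : Fin m → ℝ) :
    ∑ k, ∑ l, (∑ s, c s * Q s k l) * y k * y l
      = ∑ s, c s * (∑ k, ∑ l, Q s k l * y k * y l) := by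
  calc ∑ k, ∑ l, (∑ s, c s * Q s k l) * y k * y l
      = ∑ k, ∑ s, ∑ l, c s * Q s k l * y k * y l := by
        refine Finset.sum_congr rfl fun k _ => ?_
        simp only [Finset.sum_mul]
        rw [Finset.sum_comm]
    _ = ∑ s, ∑ k, ∑ l, c s * Q s k l * y k * y l := Finset.sum_comm
    _ = ∑ s, c s * (∑ k, ∑ l, Q s k l * y k * y l) := by
        refine Finset.sum_congr rfl fun s _ => ?_
        simp only [Finset.mul_sum]
        exact Finset.sum_congr rfl fun k _ => Finset.sum_congr rfl fun l _ => by ring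

/-! ### Auxiliary lemmas: extracting real identities from weak Kählerness -/

lemma cx {a b c d : ℝ} (h : (a:ℂ) + (b:ℂ)*Complex.I = (c:ℂ) + (d:ℂ)*Complex.I) :
    a = c ∧ b = d := by
  rw [Complex.ext_iff] at h; simpa using h

section
variable {n : ℕ} (D : WeaklyKahlerSprayData n) {y : Fin (2 * n) → ℝ}

lemma homog_pair (hy : y ≠ 0) (α : Fin n) (t : ℝ) :
    D.spray (lo n α) (t • y) = t^2 * D.spray (lo n α) y ∧
    D.spray (hi n α) (t • y) = t^2 * D.spray (hi n α) y := by
  have h := D.weaklyKahler α (t : ℂ) y hy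
  have hc : cmul n (t : ℂ) y = t • y := by simp [cmul]
  rw [hc] at h
  refine cx (h.trans ?_)
  push_cast
  ring

/-- All real spray coefficients are (real) 2-homogeneous. -/
lemma homog_all (hy : y ≠ 0) (i : Fin (2*n)) (t : ℝ) :
    D.spray i (t • y) = t^2 * D.spray i y := by
  rcases lt_or_ge (i : ℕ) n with h | h
  · have hs : i = lo n ⟨(i:ℕ), h⟩ := Fin.ext rfl
    rw [hs]; exact (homog_pair D hy _ t).1
  · have h2 : (i : ℕ) - n < n := by have := i.isLt; omega
    have hs : i = hi n ⟨(i:ℕ) - n, h2⟩ := Fin.ext (by simp [hi]; omega)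
    rw [hs]; exact (homog_pair D hy _ t).2

/-- The behaviour of the spray coefficients along the "complex rotation" direction `Jy`. -/
lemma rot_pair (hy : y ≠ 0) (α : Fin n) (t : ℝ) :
    D.spray (lo n α) (y + t • Jstd n y)
      = ((1 - t^2) * D.spray (lo n α) y - 2*t * D.spray (hi n α) y) ∧
    D.spray (hi n α) (y + t • Jstd n y)
      = (2*t * D.spray (lo n α) y + (1 - t^2) * D.spray (hi n α) y) := by
  have h := D.weaklyKahler α (1 + t * Complex.I) y hy
  have hc : cmul n (1 + t * Complex.I) y = y + t • Jstd n y := by simp [cmul]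
  rw [hc] at h
  have h2 : ((D.spray (lo n α) (y + t • Jstd n y) : ℝ) : ℂ)
      + ((D.spray (hi n α) (y + t • Jstd n y) : ℝ) : ℂ) * Complex.I
      = (((1 - t^2) * D.spray (lo n α) y - 2*t * D.spray (hi n α) y : ℝ) : ℂ)
      + ((2*t * D.spray (lo n α) y + (1 - t^2) * D.spray (hi n α) y : ℝ) : ℂ) * Complex.I := by
    rw [h]
    push_cast
    linear_combination ((t:ℂ)^2 * ((D.spray (lo n α) y : ℂ) + (D.spray (hi n α) y : ℂ)
      * Complex.I) + 2*(t:ℂ)*(D.spray (hi n α) y : ℂ)) * Complex.I_sq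
  exact cx h2

end

/-! ### Auxiliary lemmas: one-dimensional calculus along lines and rays -/

section
variable {m : ℕ}

lemma quad_deriv (a b c x : ℝ) : HasDerivAt (fun t : ℝ => a + b*t + c*t^2) (b + 2*c*x) x := by
  have h1 : HasDerivAt (fun t : ℝ => b * t) b x := by
    simpa using (hasDerivAt_id x).const_mul b
  have h2 : HasDerivAt (fun t : ℝ => c * t^2) (c * (2*x)) x := by
    simpa using (hasDerivAt_pow 2 x).const_mul c
  have := (h1.const_add a).add h2
  exact this.congr_deriv (by ring)

lemma deriv_along_line (f : (Fin m → ℝ) → ℝ) (y v : Fin m → ℝ) (hd : DifferentiableAt ℝ f y) :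
    HasDerivAt (fun t : ℝ => f (y + t • v)) (fderiv ℝ f y v) 0 := by
  have hc : HasDerivAt (fun t : ℝ => y + t • v) v 0 := by
    simpa using ((hasDerivAt_id (0:ℝ)).smul_const v).const_add y
  have hf : HasFDerivAt f (fderiv ℝ f y) (y + (0:ℝ) • v) := by
    simpa using hd.hasFDerivAt
  exact hf.comp_hasDerivAt 0 hc

lemma deriv_along_ray (f : (Fin m → ℝ) → ℝ) (y : Fin m → ℝ) (hd : DifferentiableAt ℝ f y) :
    HasDerivAt (fun t : ℝ => f (t • y)) (fderiv ℝ f y y) 1 := by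
  have hc : HasDerivAt (fun t : ℝ => t • y) y 1 := by
    simpa using (hasDerivAt_id (1:ℝ)).smul_const y
  have hf : HasFDerivAt f (fderiv ℝ f y) ((1:ℝ) • y) := by
    simpa using hd.hasFDerivAt
  exact hf.comp_hasDerivAt 1 hc

/-- Euler's theorem for functions 2-homogeneous along the ray through `y`. -/
lemma euler2_s9 (f : (Fin m → ℝ) → ℝ) (y : Fin m → ℝ) (hd : DifferentiableAt ℝ f y)
    (hom : ∀ t : ℝ, f (t • y) = t^2 * f y) : fderiv ℝ f y y = 2 * f y := by
  have h1 := deriv_along_ray f y hd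
  have h2 : (fun t : ℝ => f (t • y)) = fun t : ℝ => 0 + 0*t + (f y)*t^2 :=
    funext fun t => by rw [hom]; ring
  have h3 : HasDerivAt (fun t : ℝ => f (t • y)) (0 + 2*(f y)*1) 1 := by
    rw [h2]; exact quad_deriv _ _ _ _
  have := h1.unique h3
  rw [this]; ring

/-- The derivative of `f` in direction `v`, read off from a quadratic identity along the
line `y + t v`. -/
lemma deriv_line_quad (f : (Fin m → ℝ) → ℝ) (y v : Fin m → ℝ) (a b c : ℝ)
    (hd : DifferentiableAt ℝ f y)
    (hom : ∀ t : ℝ, f (y + t • v) = a + b*t + c*t^2) : fderiv ℝ f y v = b := by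
  have h1 := deriv_along_line f y v hd
  have h2 : (fun t : ℝ => f (y + t • v)) = fun t : ℝ => a + b*t + c*t^2 := funext hom
  have h3 : HasDerivAt (fun t : ℝ => f (y + t • v)) (b + 2*c*0) 0 := by
    rw [h2]; exact quad_deriv _ _ _ _
  have := h1.unique h3
  rw [this]; ring

/-- Euler's theorem for functions eventually 1-homogeneous along the ray through `y`. -/
lemma euler1_s9 (g : (Fin m → ℝ) → ℝ) (y : Fin m → ℝ) (hd : DifferentiableAt ℝ g y)
    (hom : ∀ᶠ t in nhds (1:ℝ), g (t • y) = t * g y) : fderiv ℝ g y y = g y := by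
  have h1 := deriv_along_ray g y hd
  have h3 : HasDerivAt (fun t : ℝ => t * g y) (g y) 1 := by
    simpa using (hasDerivAt_id (1:ℝ)).mul_const (g y)
  have h3' : HasDerivAt (fun t : ℝ => g (t • y)) (g y) 1 :=
    h3.congr_of_eventuallyEq hom
  exact h1.unique h3'

/-- The derivative of a 2-homogeneous function is 1-homogeneous. -/
lemma fderiv_homog (f : (Fin m → ℝ) → ℝ)
    (hf : ∀ z : Fin m → ℝ, z ≠ 0 → DifferentiableAt ℝ f z)
    (hom : ∀ z : Fin m → ℝ, z ≠ 0 → ∀ t : ℝ, f (t • z) = t^2 * f z)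
    (y : Fin m → ℝ) (hy : y ≠ 0) (t : ℝ) (ht : t ≠ 0) (v : Fin m → ℝ) :
    fderiv ℝ f (t • y) v = t * fderiv ℝ f y v := by
  have hty : t • y ≠ 0 := smul_ne_zero ht hy
  have hc : HasFDerivAt (fun z : Fin m → ℝ => t • z)
      (t • ContinuousLinearMap.id ℝ (Fin m → ℝ)) y :=
    (t • ContinuousLinearMap.id ℝ (Fin m → ℝ)).hasFDerivAt
  have h1 : HasFDerivAt (fun z : Fin m → ℝ => f (t • z))
      ((fderiv ℝ f (t • y)).comp (t • ContinuousLinearMap.id ℝ (Fin m → ℝ))) y :=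
    ((hf _ hty).hasFDerivAt).comp y hc
  have h2 : HasFDerivAt (fun z : Fin m → ℝ => t^2 * f z) (t^2 • fderiv ℝ f y) y :=
    (hf y hy).hasFDerivAt.const_mul (t^2)
  have hev : (fun z : Fin m → ℝ => t^2 * f z) =ᶠ[nhds y] (fun z : Fin m → ℝ => f (t • z)) := by
    filter_upwards [IsOpen.mem_nhds isOpen_compl_singleton hy] with z hz
    exact (hom z hz t).symm
  have h1' : HasFDerivAt (fun z : Fin m → ℝ => t^2 * f z)
      ((fderiv ℝ f (t • y)).comp (t • ContinuousLinearMap.id ℝ (Fin m → ℝ))) y :=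
    h1.congr_of_eventuallyEq hev
  have heq := h1'.unique h2
  have := congrArg (fun (L : (Fin m → ℝ) →L[ℝ] ℝ) => L v) heq
  simp only [ContinuousLinearMap.comp_apply, ContinuousLinearMap.smul_apply,
    ContinuousLinearMap.id_apply, ContinuousLinearMap.coe_smul', Pi.smul_apply,
    smul_eq_mul] at this
  have h3 : t * fderiv ℝ f (t • y) v = t^2 * fderiv ℝ f y v := by
    rw [← this]
    rw [(fderiv ℝ f (t • y)).map_smul]
    simp [smul_eq_mul]
  have h4 : t * fderiv ℝ f (t • y) v = t * (t * fderiv ℝ f y v) := by rw [h3]; ring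
  exact mul_left_cancel₀ ht h4

/-- A contraction `∑ₛ ∂ₛg·vˢ` is the directional derivative. -/
lemma sum_pd (g : (Fin m → ℝ) → ℝ) (y : Fin m → ℝ) (v : Fin m → ℝ) :
    ∑ s, pd g y s * v s = fderiv ℝ g y v := by
  have hv : v = ∑ s, Pi.single s (v s) := (Finset.univ_sum_single v).symm
  conv_rhs => rw [hv]
  rw [map_sum]
  refine Finset.sum_congr rfl fun s _ => ?_
  rw [show (Pi.single s (v s) : Fin m → ℝ) = v s • (Pi.single s (1:ℝ) : Fin m → ℝ) from
    by rw [← Pi.single_smul, smul_eq_mul, mul_one]]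
  rw [(fderiv ℝ g y).map_smul, smul_eq_mul, pd, mul_comm]

lemma pd2_eq_snd (f : (Fin m → ℝ) → ℝ) (y : Fin m → ℝ) (hy : y ≠ 0)
    (hf : ∀ z : Fin m → ℝ, z ≠ 0 → ContDiffAt ℝ (⊤ : ℕ∞) f z) (s l : Fin m) :
    pd2 f y s l = (fderiv ℝ (fderiv ℝ f) y) (Pi.single s 1) (Pi.single l 1) := by
  have hdf : DifferentiableAt ℝ (fderiv ℝ f) y :=
    (ContDiffAt.fderiv_right (m := (⊤ : ℕ∞)) (hf y hy) (by simp)).differentiableAt (by simp)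
  have h1 : fderiv ℝ (fun z => (fderiv ℝ f z) (Pi.single l 1)) y
      = (fderiv ℝ f y).comp (fderiv ℝ (fun _ : Fin m → ℝ => (Pi.single l (1:ℝ) : Fin m → ℝ)) y)
        + (fderiv ℝ (fderiv ℝ f) y).flip (Pi.single l 1) :=
    fderiv_clm_apply hdf (differentiableAt_const _)
  have h2 : pd2 f y s l
      = fderiv ℝ (fun z => (fderiv ℝ f z) (Pi.single l 1)) y (Pi.single s 1) := rfl
  rw [h2, h1]
  simp

/-- Symmetry of second partials (Schwarz) for a function smooth away from the origin. -/
lemma pd2_symm_s9 (f : (Fin m → ℝ) → ℝ) (y : Fin m → ℝ) (hy : y ≠ 0)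
    (hf : ∀ z : Fin m → ℝ, z ≠ 0 → ContDiffAt ℝ (⊤ : ℕ∞) f z) (s l : Fin m) :
    pd2 f y s l = pd2 f y l s := by
  rw [pd2_eq_snd f y hy hf s l, pd2_eq_snd f y hy hf l s]
  have hev : ∀ᶠ z in nhds y, HasFDerivAt f (fderiv ℝ f z) z := by
    filter_upwards [IsOpen.mem_nhds isOpen_compl_singleton hy] with z hz
    exact ((hf z hz).differentiableAt (by simp)).hasFDerivAt
  have hdf : HasFDerivAt (fderiv ℝ f) (fderiv ℝ (fderiv ℝ f) y) y :=
    ((ContDiffAt.fderiv_right (m := (⊤ : ℕ∞)) (hf y hy) (by simp)).differentiableAt (by simp)).hasFDerivAt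
  exact second_derivative_symmetric_of_eventually hev hdf _ _

end

/-- **Partial parallelism of the complex structure** (Lemma 4.1): on a strongly convex
weakly Kähler Finsler manifold, `(∇_{y^H}J)y = ∇_{y^H}(Jy) = 0`. In the complex
coordinate system, where `J^i_k` is constant, the covariant derivative of `J` with
respect to the Berwald connection contracted twice with `y` equals
`J^i_{k|l}y^k y^l = J^s_kĜ^i_{sl}y^ky^l - J^i_sĜ^s_{kl}y^ky^l = Ĝ^i_s u^s - 2J^i_sĜ^s`,
and this vanishes. -/
theorem complex_structure_parallel_along_spray (n : ℕ) (D : WeaklyKahlerSprayData n) :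
    ∀ y : Fin (2 * n) → ℝ, y ≠ 0 → ∀ i : Fin (2 * n),
      ((∑ k, ∑ l, ((∑ s, Jmat n s k * pd2 (D.spray i) y s l) -
            ∑ s, Jmat n i s * pd2 (D.spray s) y k l) * y k * y l) =
        (∑ s, pd (D.spray i) y s * Jstd n y s) - 2 * ∑ s, Jmat n i s * D.spray s y) ∧
      ((∑ s, pd (D.spray i) y s * Jstd n y s) - 2 * ∑ s, Jmat n i s * D.spray s y) = 0 := by
  intro y hy i
  have hsm : ∀ j : Fin (2*n), ∀ z : Fin (2*n) → ℝ, z ≠ 0 → ContDiffAt ℝ (⊤ : ℕ∞) (D.spray j) z :=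
    fun j z hz => (D.smooth j).contDiffAt (IsOpen.mem_nhds isOpen_compl_singleton hz)
  have hdiff : ∀ j : Fin (2*n), ∀ z : Fin (2*n) → ℝ, z ≠ 0 → DifferentiableAt ℝ (D.spray j) z :=
    fun j z hz => (hsm j z hz).differentiableAt (by simp)
  -- differentiability of the first partials
  have hgd : ∀ j : Fin (2*n), ∀ l : Fin (2*n),
      DifferentiableAt ℝ (fun z => pd (D.spray j) z l) y := by
    intro j l
    simp only [pd]
    exact DifferentiableAt.clm_apply
      ((ContDiffAt.fderiv_right (m := (⊤ : ℕ∞)) (hsm j y hy) (by simp)).differentiableAt (by simp))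
      (differentiableAt_const _)
  -- Euler for the (1-homogeneous) first partials
  have L1 : ∀ j l : Fin (2*n),
      fderiv ℝ (fun z => pd (D.spray j) z l) y y = pd (D.spray j) y l := by
    intro j l
    refine euler1_s9 _ y (hgd j l) ?_
    filter_upwards [eventually_ne_nhds (one_ne_zero (α := ℝ))] with t ht
    simp only [pd]
    exact fderiv_homog (D.spray j) (hdiff j) (fun z hz t' => homog_all D hz j t') y hy t ht _
  have L2 : ∀ j l : Fin (2*n),
      ∑ k, pd2 (D.spray j) y k l * y k = pd (D.spray j) y l := by
    intro j l
    exact (sum_pd (fun z => pd (D.spray j) z l) y y).trans (L1 j l)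
  have L3 : ∀ j s : Fin (2*n),
      ∑ l, pd2 (D.spray j) y s l * y l = pd (D.spray j) y s := by
    intro j s
    calc ∑ l, pd2 (D.spray j) y s l * y l
        = ∑ l, pd2 (D.spray j) y l s * y l :=
          Finset.sum_congr rfl fun l _ => by
            rw [pd2_symm_s9 (D.spray j) y hy (fun z hz => hsm j z hz) s l]
      _ = pd (D.spray j) y s := L2 j s
  have L4 : ∀ j : Fin (2*n), ∑ k, pd (D.spray j) y k * y k = 2 * D.spray j y := fun j =>
    (sum_pd _ y y).trans (euler2_s9 _ y (hdiff j y hy) (fun t => homog_all D hy j t))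
  have L5 : ∀ j : Fin (2*n),
      ∑ k, ∑ l, pd2 (D.spray j) y k l * y k * y l = 2 * D.spray j y := by
    intro j
    calc ∑ k, ∑ l, pd2 (D.spray j) y k l * y k * y l
        = ∑ k, pd (D.spray j) y k * y k := by
          refine Finset.sum_congr rfl fun k _ => ?_
          rw [show (∑ l, pd2 (D.spray j) y k l * y k * y l)
              = (∑ l, pd2 (D.spray j) y k l * y l) * y k from by
            rw [Finset.sum_mul]
            exact Finset.sum_congr rfl fun l _ => by ring]
          rw [L3 j k]
      _ = 2 * D.spray j y := L4 j
  -- the vanishing (part b)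
  have key : (∑ s, pd (D.spray i) y s * Jstd n y s) - 2 * ∑ s, Jmat n i s * D.spray s y = 0 := by
    have hsum : ∑ s, pd (D.spray i) y s * Jstd n y s = fderiv ℝ (D.spray i) y (Jstd n y) :=
      sum_pd _ y _
    rcases lt_or_ge (i : ℕ) n with h | h
    · obtain ⟨α, rfl⟩ : ∃ α : Fin n, i = lo n α := ⟨⟨(i:ℕ), h⟩, Fin.ext rfl⟩
      have hrow : ∑ s, Jmat n (lo n α) s * D.spray s y = -(D.spray (hi n α) y) :=
        Jrow_lo n _ _
      have hder : fderiv ℝ (D.spray (lo n α)) y (Jstd n y) = -(2 * D.spray (hi n α) y) := by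
        refine deriv_line_quad _ y (Jstd n y) (D.spray (lo n α) y)
          (-(2 * D.spray (hi n α) y)) (-(D.spray (lo n α) y)) (hdiff _ y hy) ?_
        intro t
        rw [(rot_pair D hy α t).1]; ring
      rw [hsum, hder, hrow]; ring
    · have h2 : (i:ℕ) - n < n := by have := i.isLt; omega
      obtain ⟨α, rfl⟩ : ∃ α : Fin n, i = hi n α :=
        ⟨⟨(i:ℕ) - n, h2⟩, Fin.ext (by simp [hi]; omega)⟩
      have hrow : ∑ s, Jmat n (hi n α) s * D.spray s y = D.spray (lo n α) y :=
        Jrow_hi n _ _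
      have hder : fderiv ℝ (D.spray (hi n α)) y (Jstd n y) = 2 * D.spray (lo n α) y := by
        refine deriv_line_quad _ y (Jstd n y) (D.spray (hi n α) y)
          (2 * D.spray (lo n α) y) (-(D.spray (hi n α) y)) (hdiff _ y hy) ?_
        intro t
        rw [(rot_pair D hy α t).2]; ring
      rw [hsum, hder, hrow]; ring
  refine ⟨?_, key⟩
  -- part a: the coordinate expression of the covariant derivative
  calc ∑ k, ∑ l, ((∑ s, Jmat n s k * pd2 (D.spray i) y s l)
          - ∑ s, Jmat n i s * pd2 (D.spray s) y k l) * y k * y l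
      = (∑ k, ∑ l, (∑ s, Jmat n s k * pd2 (D.spray i) y s l) * y k * y l)
        - ∑ k, ∑ l, (∑ s, Jmat n i s * pd2 (D.spray s) y k l) * y k * y l := by
        simp only [sub_mul, Finset.sum_sub_distrib]
    _ = (∑ s, (∑ k, Jmat n s k * y k) * (∑ l, pd2 (D.spray i) y s l * y l))
        - ∑ s, Jmat n i s * (∑ k, ∑ l, pd2 (D.spray s) y k l * y k * y l) := by
        rw [rearr1, rearr2]
    _ = (∑ s, pd (D.spray i) y s * Jstd n y s) - 2 * ∑ s, Jmat n i s * D.spray s y := by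
        congr 1
        · refine Finset.sum_congr rfl fun s _ => ?_
          rw [Jcol, L3 i s, mul_comm]
        · rw [Finset.mul_sum]
          refine Finset.sum_congr rfl fun s _ => ?_
          rw [L5 s]; ring
end

section
/- Let f : (0, r₀) → ℝ be a differentiable function satisfying 4f(t)² + f'(t) ≤ -λ for all t and lim_{t→0⁺} t·f(t) = 1/4. Then f(t) ≤ ½·ct_λ(2t) for all t in (0, r₀), where ct_λ(s) = √λ cot(√λ s) for λ > 0, = 1/s for λ = 0, and = √(-λ) coth(√(-λ) s) for λ < 0. (Here -λ on the right side of the Riccati inequality corresponds to the assumption H ≥ 4λ via 4f² + f' ≤ -¼H(T_o) ≤ -λ.) -/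
/-- The generalized cotangent `ct_λ`: `√λ cot(√λ s)` for `λ > 0`, `1/s` for `λ = 0`,
and `√(-λ) coth(√(-λ) s)` for `λ < 0`. -/
noncomputable def ctGen (lam s : ℝ) : ℝ :=
  if 0 < lam then Real.sqrt lam * Real.cos (Real.sqrt lam * s) / Real.sin (Real.sqrt lam * s)
  else if lam = 0 then 1 / s
  else Real.sqrt (-lam) * Real.cosh (Real.sqrt (-lam) * s) / Real.sinh (Real.sqrt (-lam) * s)

/-!
The comparison function `g(t) = ½ ct_λ(2t)` is `u'/(4u)` for the solution `u` of `u'' = -4λu`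
with `u(0) = 0`, `u'(0) ≠ 0`. To avoid dividing by `u`, compare through
`D = u²f - uu'/4 = u²(f - g)` (`riccatiDefect u u' f`). The Riccati inequality gives
`D' ≤ -(2uf - u'/2)² ≤ 0`, and `t f(t) → 1/4` gives `D(0⁺) = 0`, so `D ≤ 0` on `(0, r₀)`.
At a zero `t` of `u`, `D` would attain its maximum `0`, so `D'(t) = -u'(t)²/4` vanishes; by
conservation of `u'² + 4λu²` this forces `u'(0) = 0`. Hence `u` has no zeros on `(0, r₀)`, and
dividing `D ≤ 0` by `u²` gives `f ≤ u'/(4u) = g`.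
-/

open Set Filter Topology Real

theorem AntitoneOn.le_of_tendsto_nhdsGT {g : ℝ → ℝ} {a b L t : ℝ} (hg : AntitoneOn g (Ioo a b))
    (hlim : Tendsto g (𝓝[>] a) (𝓝 L)) (ht : t ∈ Ioo a b) : g t ≤ L := by
  refine ge_of_tendsto hlim ?_
  filter_upwards [Ioo_mem_nhdsGT ht.1] with s hs
  exact hg ⟨hs.1, hs.2.trans ht.2⟩ ht hs.2.le

section Oscillator

variable {lam : ℝ} {u u' : ℝ → ℝ}

theorem oscillator_energy_eq (hu : ∀ t, HasDerivAt u (u' t) t)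
    (hu' : ∀ t, HasDerivAt u' (-4 * lam * u t) t) (t : ℝ) :
    u' t ^ 2 + 4 * lam * u t ^ 2 = u' 0 ^ 2 + 4 * lam * u 0 ^ 2 := by
  have hE : ∀ s, HasDerivAt (fun s => u' s ^ 2 + 4 * lam * u s ^ 2) 0 s := fun s =>
    (((hu' s).fun_pow 2).add (((hu s).fun_pow 2).const_mul (4 * lam))).congr_deriv (by ring)
  exact is_const_of_deriv_eq_zero (fun s => (hE s).differentiableAt) (fun s => (hE s).deriv) t 0

end Oscillator

noncomputable def riccatiDefect (u u' f : ℝ → ℝ) (t : ℝ) : ℝ :=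
  u t ^ 2 * f t - u t * u' t / 4

section RiccatiDefect

variable {lam r₀ : ℝ} {f u u' : ℝ → ℝ}

theorem hasDerivAt_riccatiDefect {t f' : ℝ} (hf : HasDerivAt f f' t)
    (hu : HasDerivAt u (u' t) t) (hu' : HasDerivAt u' (-4 * lam * u t) t) :
    HasDerivAt (riccatiDefect u u' f)
      (2 * u t * u' t * f t + u t ^ 2 * f' - u' t ^ 2 / 4 + lam * u t ^ 2) t :=
  (((hu.fun_pow 2).mul hf).sub ((hu.mul hu').div_const 4)).congr_deriv (by ring)

theorem riccatiDefect_antitoneOn (hdiff : ∀ t ∈ Ioo 0 r₀, DifferentiableAt ℝ f t)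
    (hriccati : ∀ t ∈ Ioo 0 r₀, 4 * f t ^ 2 + deriv f t ≤ -lam)
    (hu : ∀ t, HasDerivAt u (u' t) t) (hu' : ∀ t, HasDerivAt u' (-4 * lam * u t) t) :
    AntitoneOn (riccatiDefect u u' f) (Ioo 0 r₀) := by
  have hD : ∀ t ∈ Ioo 0 r₀, HasDerivAt (riccatiDefect u u' f)
      (2 * u t * u' t * f t + u t ^ 2 * deriv f t - u' t ^ 2 / 4 + lam * u t ^ 2) t :=
    fun t ht => hasDerivAt_riccatiDefect (hdiff t ht).hasDerivAt (hu t) (hu' t)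
  refine antitoneOn_of_hasDerivWithinAt_nonpos (convex_Ioo 0 r₀)
    (fun t ht => (hD t ht).continuousAt.continuousWithinAt)
    (fun t ht => (hD t (interior_subset ht)).hasDerivWithinAt) fun t ht => ?_
  rw [interior_Ioo] at ht
  -- the derivative is at most `-(2uf - u'/2)²`
  nlinarith [mul_nonneg (sq_nonneg (u t)) (sub_nonneg.2 (hriccati t ht)),
    sq_nonneg (2 * u t * f t - u' t / 2)]

theorem tendsto_riccatiDefect_nhdsGT_zero {d : ℝ} (hu : HasDerivAt u d 0) (hu0 : u 0 = 0)
    (hu' : ContinuousAt u' 0) (hasymp : Tendsto (fun t => t * f t) (𝓝[>] 0) (𝓝 (1 / 4))) :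
    Tendsto (riccatiDefect u u' f) (𝓝[>] 0) (𝓝 0) := by
  have hu_lim : Tendsto u (𝓝[>] 0) (𝓝 0) := by
    simpa only [hu0] using hu.continuousAt.tendsto.mono_left nhdsWithin_le_nhds
  have hslope : Tendsto (fun t => t⁻¹ * u t) (𝓝[>] 0) (𝓝 d) := by
    simpa [hu0] using hu.tendsto_slope_zero_right
  have hlim := ((hu_lim.mul hslope).mul hasymp).sub
    ((hu_lim.mul (hu'.tendsto.mono_left nhdsWithin_le_nhds)).div_const 4)
  rw [zero_mul, zero_mul, zero_mul, zero_div, sub_zero] at hlim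
  refine hlim.congr' ?_
  filter_upwards [self_mem_nhdsWithin] with t (ht : 0 < t)
  simp only [riccatiDefect]
  field_simp

theorem riccatiDefect_nonpos (hdiff : ∀ t ∈ Ioo 0 r₀, DifferentiableAt ℝ f t)
    (hriccati : ∀ t ∈ Ioo 0 r₀, 4 * f t ^ 2 + deriv f t ≤ -lam)
    (hasymp : Tendsto (fun t => t * f t) (𝓝[>] 0) (𝓝 (1 / 4)))
    (hu : ∀ t, HasDerivAt u (u' t) t) (hu' : ∀ t, HasDerivAt u' (-4 * lam * u t) t)
    (hu0 : u 0 = 0) : ∀ t ∈ Ioo 0 r₀, riccatiDefect u u' f t ≤ 0 := fun _ =>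
  (riccatiDefect_antitoneOn hdiff hriccati hu hu').le_of_tendsto_nhdsGT
    (tendsto_riccatiDefect_nhdsGT_zero (hu 0) hu0 (hu' 0).continuousAt hasymp)

theorem ne_zero_of_riccatiDefect_nonpos (hdiff : ∀ t ∈ Ioo 0 r₀, DifferentiableAt ℝ f t)
    (hD : ∀ t ∈ Ioo 0 r₀, riccatiDefect u u' f t ≤ 0)
    (hu : ∀ t, HasDerivAt u (u' t) t) (hu' : ∀ t, HasDerivAt u' (-4 * lam * u t) t)
    (hu0 : u 0 = 0) (hu'0 : u' 0 ≠ 0) {t : ℝ} (ht : t ∈ Ioo 0 r₀) : u t ≠ 0 := by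
  intro hut
  have hmax : IsLocalMax (riccatiDefect u u' f) t := by
    filter_upwards [Ioo_mem_nhds ht.1 ht.2] with s hs
    simpa [riccatiDefect, hut] using hD s hs
  have hderiv := hmax.hasDerivAt_eq_zero
    (hasDerivAt_riccatiDefect (hdiff t ht).hasDerivAt (hu t) (hu' t))
  have hu't : u' t = 0 := by simpa [hut] using hderiv
  have := oscillator_energy_eq hu hu' t
  simp only [hut, hu't, hu0] at this
  exact hu'0 (pow_eq_zero_iff two_ne_zero |>.1 (by linarith))

theorem le_div_of_riccati (hdiff : ∀ t ∈ Ioo 0 r₀, DifferentiableAt ℝ f t)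
    (hriccati : ∀ t ∈ Ioo 0 r₀, 4 * f t ^ 2 + deriv f t ≤ -lam)
    (hasymp : Tendsto (fun t => t * f t) (𝓝[>] 0) (𝓝 (1 / 4)))
    (hu : ∀ t, HasDerivAt u (u' t) t) (hu' : ∀ t, HasDerivAt u' (-4 * lam * u t) t)
    (hu0 : u 0 = 0) (hu'0 : u' 0 ≠ 0) {t : ℝ} (ht : t ∈ Ioo 0 r₀) :
    f t ≤ u' t / (4 * u t) := by
  have hD := riccatiDefect_nonpos hdiff hriccati hasymp hu hu' hu0
  have hut := ne_zero_of_riccatiDefect_nonpos hdiff hD hu hu' hu0 hu'0 ht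
  have hu2 : 0 < u t ^ 2 := by positivity
  have key : u t ^ 2 * f t ≤ u t ^ 2 * (u' t / (4 * u t)) := by
    have := hD t ht
    rw [riccatiDefect] at this
    field_simp
    linarith
  exact le_of_mul_le_mul_left key hu2

end RiccatiDefect

theorem exists_oscillator_half_ctGen (lam : ℝ) :
    ∃ u u' : ℝ → ℝ, (∀ t, HasDerivAt u (u' t) t) ∧ (∀ t, HasDerivAt u' (-4 * lam * u t) t) ∧
      u 0 = 0 ∧ u' 0 ≠ 0 ∧ ∀ t, 1 / 2 * ctGen lam (2 * t) = u' t / (4 * u t) := by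
  have harg : ∀ c t : ℝ, HasDerivAt (fun s => c * (2 * s)) (2 * c) t := fun c t =>
    (((hasDerivAt_id t).const_mul 2).const_mul c).congr_deriv (by ring)
  rcases lt_trichotomy lam 0 with hlam | rfl | hlam
  · have hc : √(-lam) ^ 2 = -lam := sq_sqrt (by linarith)
    have hc0 : 0 < √(-lam) := sqrt_pos.2 (by linarith)
    refine ⟨fun t => sinh (√(-lam) * (2 * t)), fun t => 2 * √(-lam) * cosh (√(-lam) * (2 * t)),
      fun t => (harg _ t).sinh.congr_deriv (by ring),
      fun t => ((harg _ t).cosh.const_mul _).congr_deriv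
        (by linear_combination (4 * sinh (√(-lam) * (2 * t))) * hc),
      by simp, by simp [hc0.ne'], fun t => ?_⟩
    simp only [ctGen, if_neg (not_lt.2 hlam.le), if_neg hlam.ne]
    ring
  · refine ⟨fun t => t, fun _ => 1, hasDerivAt_id', fun t => (hasDerivAt_const t 1).congr_deriv
      (by ring), rfl, one_ne_zero, fun t => ?_⟩
    simp only [ctGen, lt_irrefl, if_false, if_true]
    ring
  · have hc : √lam ^ 2 = lam := sq_sqrt hlam.le
    have hc0 : 0 < √lam := sqrt_pos.2 hlam
    refine ⟨fun t => sin (√lam * (2 * t)), fun t => 2 * √lam * cos (√lam * (2 * t)),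
      fun t => (harg _ t).sin.congr_deriv (by ring),
      fun t => ((harg _ t).cos.const_mul _).congr_deriv
        (by linear_combination (-4 * sin (√lam * (2 * t))) * hc),
      by simp, by simp [hc0.ne'], fun t => ?_⟩
    simp only [ctGen, if_pos hlam]
    ring

theorem riccati_comparison_general (lam r₀ : ℝ) (f : ℝ → ℝ)
    (hdiff : ∀ t ∈ Set.Ioo (0 : ℝ) r₀, DifferentiableAt ℝ f t)
    (hriccati : ∀ t ∈ Set.Ioo (0 : ℝ) r₀, 4 * (f t) ^ 2 + deriv f t ≤ -lam)
    (hasymp : Filter.Tendsto (fun t => t * f t) (nhdsWithin 0 (Set.Ioi 0))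
      (nhds (1 / 4))) :
    ∀ t ∈ Set.Ioo (0 : ℝ) r₀, f t ≤ (1 / 2) * ctGen lam (2 * t) := by
  obtain ⟨u, u', hu, hu', hu0, hu'0, hct⟩ := exists_oscillator_half_ctGen lam
  intro t ht
  rw [hct]
  exact le_div_of_riccati hdiff hriccati hasymp hu hu' hu0 hu'0 ht

/-- **Riccati comparison lemma.** If `f : (0, r₀) → ℝ` is differentiable with
`4f(t)² + f'(t) ≤ -λ` on `(0, r₀)` and `t·f(t) → 1/4` as `t → 0⁺`, then
`f(t) ≤ ½·ct_λ(2t)` on `(0, r₀)`. -/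
theorem riccati_comparison (lam r₀ : ℝ) (hr₀ : 0 < r₀) (f : ℝ → ℝ)
    (hdiff : ∀ t ∈ Set.Ioo (0 : ℝ) r₀, DifferentiableAt ℝ f t)
    (hriccati : ∀ t ∈ Set.Ioo (0 : ℝ) r₀, 4 * (f t) ^ 2 + deriv f t ≤ -lam)
    (hasymp : Filter.Tendsto (fun t => t * f t) (nhdsWithin 0 (Set.Ioi 0))
      (nhds (1 / 4))) :
    ∀ t ∈ Set.Ioo (0 : ℝ) r₀, f t ≤ (1 / 2) * ctGen lam (2 * t) :=
  riccati_comparison_general lam r₀ f hdiff hriccati hasymp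
end
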